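/- Let $\mathcal{M} = (\mathcal{S}, \mathcal{A}, \mathcal{P}, c, \gamma)$ be a finite discounted MDP with costs $c(s,a) \in [0,1]$ and $\gamma \in (0,1)$. Suppose the Markov chain on state-action pairs induced by a policy $\pi$ is geometrically mixing with constants $(C, \rho)$, and let $\hat{Q}^\pi(s,a)$ be the on-policy Monte Carlo estimator defined as the discounted cost sum $\sum_{t=\tau(z)}^{n-1} \gamma^{t - \tau(z)} c(S_t, A_t)$ if the truncated hitting time $\tau(z)$ of $z = (s,a)$ satisfies $\tau(z) \le n-1$, and $0$ otherwise. Then for any $z$ with stationary probability $\sigma^\pi(z) > 0$ and $t_{\mathrm{mix}}(z) = \lceil \log_\rho(\sigma^\pi(z)/(2C)) \rceil$, the bias satisfies $|\mathbb{E}[\hat{Q}^\pi(s,a)] - Q^\pi(s,a)| \le \frac{2(n+1)}{1-\gamma}\left[\gamma^{n-1} + \left(1 - \frac{\sigma^\pi(z)}{2 t_{\mathrm{mix}}(z)}\right)^{n-1}\right]$. -/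

import Mathlib

/-!
By mixing, at time `tmix` the law of the state-action chain is within `σ z / 2` of `σ` in `ℓ¹`, so
from any start it sits at `z = (s, a)` with probability at least `σ z / 2`. By the Markov property
the probability of not visiting `z` during the first `q * tmix + 1` steps is then at most
`(1 - σ z / 2) ^ q`, and Bernoulli's inequality turns this into `2 β ^ i` for the first `i` steps,
where `β = 1 - σ z / (2 tmix)`. If `z` is first hit at time `i < n`, the estimator is the discounted
cost from `z` truncated after `n - i` terms, which falls short of `Q z` by at most
`γ ^ (n - i) / (1 - γ)`; if `z` is not hit, the shortfall is at most `Q z ≤ 1 / (1 - γ)`. Each of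
these `n + 1` contributions is at most `2 / (1 - γ) * (γ ^ (n - 1) + β ^ (n - 1))`.
-/

open Finset

/-- `t`-step transition probabilities of a finite Markov chain with kernel `K`. -/
noncomputable def kpow {Z : Type*} [Fintype Z] [DecidableEq Z]
    (K : Z → Z → ℝ) : ℕ → Z → Z → ℝ
  | 0, z0, z' => if z0 = z' then 1 else 0
  | t + 1, z0, z' => ∑ u, K z0 u * kpow K t u z'

/-- `hitProb K z i z0` is the probability that the chain started at `z0` visits `z`
for the first time at time `i`. -/
noncomputable def hitProb {Z : Type*} [Fintype Z] [DecidableEq Z]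
    (K : Z → Z → ℝ) (z : Z) : ℕ → Z → ℝ
  | 0, z0 => if z0 = z then 1 else 0
  | i + 1, z0 => if z0 = z then 0 else ∑ u, K z0 u * hitProb K z i u

lemma tsum_sub_sum_range_le_geometric {f : ℕ → ℝ} {γ : ℝ} (hγ0 : 0 ≤ γ) (hγ1 : γ < 1)
    (hf0 : ∀ t, 0 ≤ f t) (hfγ : ∀ t, f t ≤ γ ^ t) (k : ℕ) :
    0 ≤ ∑' t, f t - ∑ t ∈ range k, f t ∧ ∑' t, f t - ∑ t ∈ range k, f t ≤ γ ^ k * (1 - γ)⁻¹ := by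
  have hγsum : Summable (fun t : ℕ => γ ^ t) := summable_geometric_of_lt_one hγ0 hγ1
  have hfsum : Summable f := hγsum.of_nonneg_of_le hf0 hfγ
  rw [← hfsum.sum_add_tsum_nat_add k, add_sub_cancel_left]
  refine ⟨tsum_nonneg fun t => hf0 _, ?_⟩
  calc ∑' t, f (t + k) ≤ ∑' t, γ ^ (t + k) :=
        ((summable_nat_add_iff k).mpr hfsum).tsum_le_tsum (fun t => hfγ _)
          ((summable_nat_add_iff k).mpr hγsum)
    _ = γ ^ k * (1 - γ)⁻¹ := by
        simp_rw [pow_add]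
        rw [tsum_mul_right, tsum_geometric_of_lt_one hγ0 hγ1, mul_comm]

lemma abs_sum_mul_sub_le {ι : Type*} {s : Finset ι} {w x e : ι → ℝ} {q B : ℝ}
    (hw0 : ∀ i ∈ s, 0 ≤ w i) (hw1 : ∑ i ∈ s, w i ≤ 1)
    (hxq : ∀ i ∈ s, x i ≤ q) (hxe : ∀ i ∈ s, q - x i ≤ e i * B) (hq0 : 0 ≤ q) (hqB : q ≤ B) :
    |∑ i ∈ s, w i * x i - q| ≤ (∑ i ∈ s, w i * e i + (1 - ∑ i ∈ s, w i)) * B := by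
  have hle : ∑ i ∈ s, w i * x i ≤ q :=
    calc ∑ i ∈ s, w i * x i ≤ ∑ i ∈ s, w i * q :=
          sum_le_sum fun i hi => mul_le_mul_of_nonneg_left (hxq i hi) (hw0 i hi)
      _ = (∑ i ∈ s, w i) * q := (sum_mul ..).symm
      _ ≤ q := mul_le_of_le_one_left hq0 hw1
  have hsplit : q - ∑ i ∈ s, w i * x i = ∑ i ∈ s, w i * (q - x i) + (1 - ∑ i ∈ s, w i) * q := by
    simp only [mul_sub, sum_sub_distrib, ← sum_mul]
    ring
  have hterm : ∑ i ∈ s, w i * (q - x i) ≤ ∑ i ∈ s, w i * e i * B :=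
    sum_le_sum fun i hi => by rw [mul_assoc]; exact mul_le_mul_of_nonneg_left (hxe i hi) (hw0 i hi)
  rw [abs_sub_comm, abs_of_nonneg (sub_nonneg.mpr hle), hsplit, add_mul, sum_mul]
  gcongr

lemma pow_mul_pow_le_pow_add_pow {β γ : ℝ} (hβ0 : 0 ≤ β) (hβ1 : β ≤ 1) (hγ0 : 0 ≤ γ) (hγ1 : γ ≤ 1)
    {i j k : ℕ} (hk : k ≤ i + j) : β ^ i * γ ^ j ≤ β ^ k + γ ^ k := by
  rcases le_total β γ with hβγ | hγβ
  · calc β ^ i * γ ^ j ≤ γ ^ i * γ ^ j := by gcongr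
      _ = γ ^ (i + j) := (pow_add ..).symm
      _ ≤ γ ^ k := pow_le_pow_of_le_one hγ0 hγ1 hk
      _ ≤ β ^ k + γ ^ k := le_add_of_nonneg_left (pow_nonneg hβ0 k)
  · calc β ^ i * γ ^ j ≤ β ^ i * β ^ j := by gcongr
      _ = β ^ (i + j) := (pow_add ..).symm
      _ ≤ β ^ k := pow_le_pow_of_le_one hβ0 hβ1 hk
      _ ≤ β ^ k + γ ^ k := le_add_of_nonneg_right (pow_nonneg hγ0 k)

lemma sum_mul_pow_add_le {h : ℕ → ℝ} {β γ b r : ℝ} (n : ℕ)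
    (hβ0 : 0 ≤ β) (hβ1 : β ≤ 1) (hγ0 : 0 ≤ γ) (hγ1 : γ ≤ 1) (hb : 0 ≤ b)
    (hh : ∀ i < n, h i ≤ b * β ^ i) (hr : r ≤ b * β ^ n) :
    ∑ i ∈ range n, h i * γ ^ (n - i) + r ≤ (n + 1) * b * (γ ^ (n - 1) + β ^ (n - 1)) := by
  have hterm : ∀ i ∈ range n, h i * γ ^ (n - i) ≤ b * (γ ^ (n - 1) + β ^ (n - 1)) := by
    intro i hi
    have hin := mem_range.mp hi
    calc h i * γ ^ (n - i) ≤ b * β ^ i * γ ^ (n - i) := by gcongr; exact hh i hin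
      _ ≤ b * (γ ^ (n - 1) + β ^ (n - 1)) := by
          rw [mul_assoc, add_comm (γ ^ _)]
          gcongr
          exact pow_mul_pow_le_pow_add_pow hβ0 hβ1 hγ0 hγ1 (by omega)
  have hrest : r ≤ b * (γ ^ (n - 1) + β ^ (n - 1)) := by
    refine hr.trans (mul_le_mul_of_nonneg_left ?_ hb)
    simpa [add_comm] using pow_mul_pow_le_pow_add_pow (j := 0) hβ0 hβ1 hγ0 hγ1 (n.sub_le 1)
  calc ∑ i ∈ range n, h i * γ ^ (n - i) + r
      ≤ ∑ _i ∈ range n, b * (γ ^ (n - 1) + β ^ (n - 1)) + b * (γ ^ (n - 1) + β ^ (n - 1)) :=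
        add_le_add (sum_le_sum hterm) hrest
    _ = (n + 1) * b * (γ ^ (n - 1) + β ^ (n - 1)) := by
        rw [sum_const, card_range, nsmul_eq_mul]
        ring

lemma pow_natCeil_log_div_log_le {ρ x : ℝ} (hρ0 : 0 < ρ) (hρ1 : ρ < 1) (hx : 0 < x) :
    ρ ^ ⌈Real.log x / Real.log ρ⌉₊ ≤ x := by
  rw [Real.pow_le_iff_le_log hρ0 hx, ← div_le_iff_of_neg (Real.log_neg hρ0 hρ1)]
  exact Nat.le_ceil _

lemma le_of_sum_abs_sub_le {ι : Type*} [Fintype ι] {p σ : ι → ℝ} {ε : ℝ}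
    (h : ∑ i, |p i - σ i| ≤ ε) (i : ι) : σ i - ε ≤ p i := by
  have := (single_le_sum (fun j _ => abs_nonneg (p j - σ j)) (mem_univ i)).trans h
  linarith [neg_abs_le (p i - σ i)]

section MarkovChain

variable {Z : Type*} [Fintype Z] [DecidableEq Z] {K : Z → Z → ℝ}

lemma kpow_nonneg (hK0 : ∀ u w, 0 ≤ K u w) : ∀ (t : ℕ) (z0 z' : Z), 0 ≤ kpow K t z0 z'
  | 0, z0, z' => by unfold kpow; split <;> norm_num
  | t + 1, z0, z' => sum_nonneg fun u _ => mul_nonneg (hK0 _ _) (kpow_nonneg hK0 t u z')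

lemma sum_kpow (hK1 : ∀ u, ∑ w, K u w = 1) : ∀ (t : ℕ) (z0 : Z), ∑ z', kpow K t z0 z' = 1
  | 0, z0 => by simp [kpow]
  | t + 1, z0 => by
    simp only [kpow]
    rw [sum_comm]
    simp_rw [← mul_sum, sum_kpow hK1 t, mul_one]
    exact hK1 z0

lemma kpow_le_one (hK0 : ∀ u w, 0 ≤ K u w) (hK1 : ∀ u, ∑ w, K u w = 1)
    (t : ℕ) (z0 z' : Z) : kpow K t z0 z' ≤ 1 :=
  (single_le_sum (fun w _ => kpow_nonneg hK0 t z0 w) (mem_univ z')).trans_eq (sum_kpow hK1 t z0)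

lemma sum_kpow_mul_le (hK0 : ∀ u w, 0 ≤ K u w) (hK1 : ∀ u, ∑ w, K u w = 1)
    {g : Z → ℝ} {b : ℝ} (hg : ∀ u, g u ≤ b) (t : ℕ) (z0 : Z) :
    ∑ u, kpow K t z0 u * g u ≤ b :=
  calc ∑ u, kpow K t z0 u * g u ≤ ∑ u, kpow K t z0 u * b :=
        sum_le_sum fun u _ => mul_le_mul_of_nonneg_left (hg u) (kpow_nonneg hK0 t z0 u)
    _ = b := by rw [← sum_mul, sum_kpow hK1, one_mul]

variable {z : Z}

lemma hitProb_nonneg (hK0 : ∀ u w, 0 ≤ K u w) : ∀ (i : ℕ) (z0 : Z), 0 ≤ hitProb K z i z0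
  | 0, z0 => by unfold hitProb; split <;> norm_num
  | i + 1, z0 => by
    unfold hitProb
    split
    · rfl
    · exact sum_nonneg fun u _ => mul_nonneg (hK0 _ _) (hitProb_nonneg hK0 i u)

noncomputable def avoidProb (K : Z → Z → ℝ) (z : Z) (k : ℕ) (z0 : Z) : ℝ :=
  1 - ∑ j ∈ range k, hitProb K z j z0

lemma avoidProb_self {k : ℕ} (hk : k ≠ 0) : avoidProb K z k z = 0 := by
  obtain ⟨k, rfl⟩ := Nat.exists_eq_succ_of_ne_zero hk
  simp [avoidProb, sum_range_succ', hitProb]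

lemma avoidProb_succ_of_ne (hK1 : ∀ u, ∑ w, K u w = 1) (k : ℕ) {z0 : Z} (h : z0 ≠ z) :
    avoidProb K z (k + 1) z0 = ∑ u, K z0 u * avoidProb K z k u := by
  simp only [avoidProb, sum_range_succ', hitProb, if_neg h, add_zero, mul_sub, mul_one,
    sum_sub_distrib, hK1]
  rw [sum_comm]
  simp_rw [mul_sum]

lemma avoidProb_succ (k : ℕ) (z0 : Z) :
    avoidProb K z (k + 1) z0 = avoidProb K z k z0 - hitProb K z k z0 := by
  simp only [avoidProb, sum_range_succ]
  ring

lemma avoidProb_nonneg (hK0 : ∀ u w, 0 ≤ K u w) (hK1 : ∀ u, ∑ w, K u w = 1) :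
    ∀ (k : ℕ) (z0 : Z), 0 ≤ avoidProb K z k z0
  | 0, z0 => by simp [avoidProb]
  | k + 1, z0 => by
    by_cases h : z0 = z
    · rw [h, avoidProb_self k.succ_ne_zero]
    · rw [avoidProb_succ_of_ne hK1 k h]
      exact sum_nonneg fun u _ => mul_nonneg (hK0 _ _) (avoidProb_nonneg hK0 hK1 k u)

lemma avoidProb_le_one (hK0 : ∀ u w, 0 ≤ K u w) (k : ℕ) (z0 : Z) : avoidProb K z k z0 ≤ 1 :=
  sub_le_self _ (sum_nonneg fun j _ => hitProb_nonneg hK0 j z0)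

lemma avoidProb_antitone (hK0 : ∀ u w, 0 ≤ K u w) (z0 : Z) :
    Antitone fun k => avoidProb K z k z0 :=
  antitone_nat_of_succ_le fun k => by
    rw [avoidProb_succ]
    exact sub_le_self _ (hitProb_nonneg hK0 k z0)

lemma hitProb_le_avoidProb (hK0 : ∀ u w, 0 ≤ K u w) (hK1 : ∀ u, ∑ w, K u w = 1)
    (k : ℕ) (z0 : Z) : hitProb K z k z0 ≤ avoidProb K z k z0 :=
  sub_nonneg.mp (avoidProb_succ (K := K) (z := z) k z0 ▸ avoidProb_nonneg hK0 hK1 (k + 1) z0)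

/-- Markov property at time `m`: to avoid `z` for `m + k` steps, the chain must in particular
avoid it for `k` steps after time `m`. -/
lemma avoidProb_add_le (hK0 : ∀ u w, 0 ≤ K u w) (hK1 : ∀ u, ∑ w, K u w = 1) (k : ℕ) :
    ∀ (m : ℕ) (z0 : Z), avoidProb K z (m + k) z0 ≤ ∑ u, kpow K m z0 u * avoidProb K z k u
  | 0, z0 => by simp [kpow]
  | m + 1, z0 => by
    by_cases h : z0 = z
    · rw [h, avoidProb_self (by omega)]
      exact sum_nonneg fun u _ =>
        mul_nonneg (kpow_nonneg hK0 _ _ _) (avoidProb_nonneg hK0 hK1 k u)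
    · calc avoidProb K z (m + 1 + k) z0 = ∑ v, K z0 v * avoidProb K z (m + k) v := by
            rw [Nat.add_right_comm, avoidProb_succ_of_ne hK1 _ h]
        _ ≤ ∑ v, K z0 v * ∑ u, kpow K m v u * avoidProb K z k u :=
            sum_le_sum fun v _ =>
              mul_le_mul_of_nonneg_left (avoidProb_add_le hK0 hK1 k m v) (hK0 _ _)
        _ = ∑ u, kpow K (m + 1) z0 u * avoidProb K z k u := by
            simp only [kpow, mul_sum, sum_mul, mul_assoc]
            exact sum_comm

lemma one_sub_div_natCast_nonneg {x : ℝ} (hx : x ≤ 1) (m : ℕ) : 0 ≤ 1 - x / m := by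
  rcases Nat.eq_zero_or_pos m with rfl | hm
  · simp
  · exact sub_nonneg.mpr (div_le_one_of_le₀ (hx.trans (by exact_mod_cast hm)) m.cast_nonneg)

variable {m : ℕ} {δ : ℝ}

/-- Doeblin's argument: every `m` steps the chain enters `z` with probability at least `δ`. -/
lemma avoidProb_mul_add_one_le (hK0 : ∀ u w, 0 ≤ K u w) (hK1 : ∀ u, ∑ w, K u w = 1)
    (hmin : ∀ u, δ ≤ kpow K m u z) : ∀ (q : ℕ) (z0 : Z),
      avoidProb K z (q * m + 1) z0 ≤ (1 - δ) ^ q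
  | 0, z0 => by simpa using avoidProb_le_one hK0 1 z0
  | q + 1, z0 => by
    have hq : 0 ≤ (1 - δ) ^ q :=
      pow_nonneg (sub_nonneg.mpr ((hmin z0).trans (kpow_le_one hK0 hK1 m z0 z))) q
    have hrest : ∑ u ∈ univ.erase z, kpow K m z0 u * avoidProb K z (q * m + 1) u
        ≤ (1 - kpow K m z0 z) * (1 - δ) ^ q :=
      calc ∑ u ∈ univ.erase z, kpow K m z0 u * avoidProb K z (q * m + 1) u
          ≤ ∑ u ∈ univ.erase z, kpow K m z0 u * (1 - δ) ^ q :=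
            sum_le_sum fun u _ => mul_le_mul_of_nonneg_left
              (avoidProb_mul_add_one_le hK0 hK1 hmin q u) (kpow_nonneg hK0 _ _ _)
        _ = (1 - kpow K m z0 z) * (1 - δ) ^ q := by
            rw [← sum_mul, ← sum_kpow hK1 m z0, ← add_sum_erase _ _ (mem_univ z),
              add_sub_cancel_left]
    calc avoidProb K z ((q + 1) * m + 1) z0
        ≤ ∑ u, kpow K m z0 u * avoidProb K z (q * m + 1) u := by
          rw [show (q + 1) * m + 1 = m + (q * m + 1) by ring]
          exact avoidProb_add_le hK0 hK1 _ m z0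
      _ = ∑ u ∈ univ.erase z, kpow K m z0 u * avoidProb K z (q * m + 1) u := by
          rw [← add_sum_erase _ _ (mem_univ z), avoidProb_self (by omega), mul_zero, zero_add]
      _ ≤ (1 - δ) * (1 - δ) ^ q := hrest.trans (by gcongr; exact hmin z0)
      _ = (1 - δ) ^ (q + 1) := (pow_succ' ..).symm

lemma one_sub_mul_avoidProb_le_pow (hK0 : ∀ u w, 0 ≤ K u w) (hK1 : ∀ u, ∑ w, K u w = 1)
    (hδ : 0 ≤ δ) (hmin : ∀ u, δ ≤ kpow K m u z) (i : ℕ) (z0 : Z) :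
    (1 - δ) * avoidProb K z i z0 ≤ (1 - δ / m) ^ i := by
  have hδ1 : δ ≤ 1 := (hmin z0).trans (kpow_le_one hK0 hK1 m z0 z)
  have hA0 := avoidProb_nonneg hK0 hK1 i z0 (z := z)
  have hA1 := avoidProb_le_one hK0 i z0 (z := z)
  rcases Nat.eq_zero_or_pos m with rfl | hm
  · simpa using mul_le_one₀ (by linarith) hA0 hA1
  rcases Nat.eq_zero_or_pos i with rfl | hi
  · simpa using mul_le_one₀ (by linarith) hA0 hA1
  have hβ0 : 0 ≤ 1 - δ / m := one_sub_div_natCast_nonneg hδ1 m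
  have hβ1 : 1 - δ / m ≤ 1 := sub_le_self _ (by positivity)
  have hBernoulli : 1 - δ ≤ (1 - δ / m) ^ m := by
    have := one_add_mul_le_pow (a := -(δ / m)) (by linarith) m
    rwa [mul_neg, mul_div_cancel₀ _ (by positivity), ← sub_eq_add_neg, ← sub_eq_add_neg] at this
  have hlo : (i - 1) / m * m + 1 ≤ i := by have := Nat.div_mul_le_self (i - 1) m; omega
  have hhi : i ≤ ((i - 1) / m + 1) * m := by
    have := Nat.lt_div_mul_add (a := i - 1) hm; rw [add_mul]; omega
  generalize (i - 1) / m = q at hlo hhi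
  calc (1 - δ) * avoidProb K z i z0 ≤ (1 - δ) * (1 - δ) ^ q :=
        mul_le_mul_of_nonneg_left ((avoidProb_antitone hK0 z0 hlo).trans
          (avoidProb_mul_add_one_le hK0 hK1 hmin q z0)) (by linarith)
    _ = (1 - δ) ^ (q + 1) := (pow_succ' ..).symm
    _ ≤ ((1 - δ / m) ^ m) ^ (q + 1) := pow_le_pow_left₀ (by linarith) hBernoulli _
    _ = (1 - δ / m) ^ ((q + 1) * m) := by rw [← pow_mul, mul_comm]
    _ ≤ (1 - δ / m) ^ i := pow_le_pow_of_le_one hβ0 hβ1 hhi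

lemma avoidProb_le_two_mul_pow (hK0 : ∀ u w, 0 ≤ K u w) (hK1 : ∀ u, ∑ w, K u w = 1)
    (hδ0 : 0 ≤ δ) (hδ : δ ≤ 1 / 2) (hmin : ∀ u, δ ≤ kpow K m u z) (i : ℕ) (z0 : Z) :
    avoidProb K z i z0 ≤ 2 * (1 - δ / m) ^ i := by
  have := one_sub_mul_avoidProb_le_pow hK0 hK1 hδ0 hmin i z0
  nlinarith [avoidProb_nonneg hK0 hK1 i z0 (z := z)]

lemma half_le_kpow_of_mixing {σ : Z → ℝ} {C ρ : ℝ} (hC : 0 < C) (hρ0 : 0 < ρ) (hρ1 : ρ < 1)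
    (hmix : ∀ (t : ℕ) (z0 : Z), ∑ z', |kpow K t z0 z' - σ z'| ≤ C * ρ ^ t) (hσz : 0 < σ z)
    (u : Z) : σ z / 2 ≤ kpow K ⌈Real.log (σ z / (2 * C)) / Real.log ρ⌉₊ u z := by
  have hCρ : C * ρ ^ ⌈Real.log (σ z / (2 * C)) / Real.log ρ⌉₊ ≤ σ z / 2 :=
    calc _ ≤ C * (σ z / (2 * C)) := by
          gcongr
          exact pow_natCeil_log_div_log_le hρ0 hρ1 (by positivity)
      _ = σ z / 2 := by field_simp
  linarith [le_of_sum_abs_sub_le (hmix ⌈Real.log (σ z / (2 * C)) / Real.log ρ⌉₊ u) z]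

end MarkovChain

lemma sum_transition_mul_policy_eq_one {S A : Type*} [Fintype S] [Fintype A]
    {Pk : S → A → S → ℝ} {π : S → A → ℝ} (hP1 : ∀ s a, ∑ s', Pk s a s' = 1)
    (hπ1 : ∀ s, ∑ a, π s a = 1) (s : S) (a : A) :
    ∑ w : S × A, Pk s a w.1 * π w.1 w.2 = 1 := by
  simp only [Fintype.sum_prod_type, ← mul_sum, hπ1, mul_one, hP1]

theorem omc_bias_bound_general {S A : Type*} [Fintype S] [Fintype A] [DecidableEq S] [DecidableEq A]
    (Pk : S → A → S → ℝ) (c : S → A → ℝ) (π : S → A → ℝ) (γ C ρ : ℝ)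
    (hP0 : ∀ s a s', 0 ≤ Pk s a s') (hP1 : ∀ s a, ∑ s', Pk s a s' = 1)
    (hπ0 : ∀ s a, 0 ≤ π s a) (hπ1 : ∀ s, ∑ a, π s a = 1)
    (hc0 : ∀ s a, 0 ≤ c s a) (hc1 : ∀ s a, c s a ≤ 1)
    (hγ0 : 0 < γ) (hγ1 : γ < 1)
    (hC : 0 < C) (hρ0 : 0 < ρ) (hρ1 : ρ < 1)
    (K : S × A → S × A → ℝ)
    (hK : ∀ z w, K z w = Pk z.1 z.2 w.1 * π w.1 w.2)
    (σ : S × A → ℝ)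
    (hσ0 : ∀ z, 0 ≤ σ z) (hσ1 : ∑ z, σ z = 1)
    (hmix : ∀ (t : ℕ) (z0 : S × A), ∑ z', |kpow K t z0 z' - σ z'| ≤ C * ρ ^ t)
    (Qpi : S × A → ℝ)
    (hQ : ∀ z, Qpi z = ∑' t : ℕ, γ ^ t * ∑ w, kpow K t z w * c w.1 w.2)
    (s : S) (a : A) (hσz : 0 < σ (s, a))
    (tmix : ℕ) (htmix : tmix = ⌈Real.log (σ (s, a) / (2 * C)) / Real.log ρ⌉₊)
    (n : ℕ) (z0 : S × A) :
    |(∑ i ∈ Finset.range n, hitProb K (s, a) i z0 *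
        ∑ t ∈ Finset.range (n - i), γ ^ t * ∑ w, kpow K t (s, a) w * c w.1 w.2)
        - Qpi (s, a)|
      ≤ 2 * (n + 1) / (1 - γ) *
        (γ ^ (n - 1) + (1 - σ (s, a) / (2 * tmix)) ^ (n - 1)) := by
  set z : S × A := (s, a)
  have hK0 : ∀ u w, 0 ≤ K u w := fun u w => hK u w ▸ mul_nonneg (hP0 _ _ _) (hπ0 _ _)
  have hK1 : ∀ u, ∑ w, K u w = 1 := fun u => by
    simp only [hK]
    exact sum_transition_mul_policy_eq_one hP1 hπ1 u.1 u.2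
  set f : ℕ → ℝ := fun t => γ ^ t * ∑ w, kpow K t z w * c w.1 w.2
  have hf0 : ∀ t, 0 ≤ f t := fun t => mul_nonneg (pow_nonneg hγ0.le t)
    (sum_nonneg fun w _ => mul_nonneg (kpow_nonneg hK0 _ _ _) (hc0 _ _))
  have hfγ : ∀ t, f t ≤ γ ^ t := fun t => mul_le_of_le_one_right (pow_nonneg hγ0.le t)
    (sum_kpow_mul_le hK0 hK1 (fun w => hc1 w.1 w.2) t z)
  have htail := tsum_sub_sum_range_le_geometric hγ0.le hγ1 hf0 hfγ
  have hbias : |∑ i ∈ range n, hitProb K z i z0 * ∑ t ∈ range (n - i), f t - Qpi z|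
      ≤ (∑ i ∈ range n, hitProb K z i z0 * γ ^ (n - i) + avoidProb K z n z0) * (1 - γ)⁻¹ := by
    rw [hQ z]
    exact abs_sum_mul_sub_le (fun i _ => hitProb_nonneg hK0 i z0)
      (sub_nonneg.mp (avoidProb_nonneg hK0 hK1 n z0)) (fun i _ => sub_nonneg.mp (htail _).1)
      (fun i _ => (htail _).2) (tsum_nonneg hf0) (by simpa using (htail 0).2)
  have hσz1 : σ z ≤ 1 := (single_le_sum (fun u _ => hσ0 u) (mem_univ z)).trans_eq hσ1
  have hmin : ∀ u, σ z / 2 ≤ kpow K tmix u z := htmix ▸ half_le_kpow_of_mixing hC hρ0 hρ1 hmix hσz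
  have havoid : ∀ i, avoidProb K z i z0 ≤ 2 * (1 - σ z / 2 / tmix) ^ i := fun i =>
    avoidProb_le_two_mul_pow hK0 hK1 (by positivity) (by linarith) hmin i z0
  rw [← div_div]
  set β := 1 - σ z / 2 / tmix
  have hβ0 : 0 ≤ β := one_sub_div_natCast_nonneg (by linarith) tmix
  have hβ1 : β ≤ 1 := sub_le_self _ (by positivity)
  have hsum := sum_mul_pow_add_le n hβ0 hβ1 hγ0.le hγ1.le zero_le_two
    (fun i _ => (hitProb_le_avoidProb hK0 hK1 i z0).trans (havoid i)) (havoid n)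
  calc _ ≤ _ := hbias
    _ ≤ (n + 1) * 2 * (γ ^ (n - 1) + β ^ (n - 1)) * (1 - γ)⁻¹ := by gcongr
    _ = _ := by ring

/-- bias of the on-policy Monte Carlo estimator of the Q-function.
`Qpi` is the true Q-function of policy `π`; the expectation of the OMC estimator
started at `z0`, computed via the strong Markov property at the truncated hitting time
of `z = (s,a)`, deviates from `Qpi z` by at most
`2(n+1)/(1-γ) * (γ^(n-1) + (1 - σ z / (2 t_mix z))^(n-1))`. -/
theorem omc_bias_bound {S A : Type*} [Fintype S] [Fintype A] [DecidableEq S] [DecidableEq A]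
    (Pk : S → A → S → ℝ) (c : S → A → ℝ) (π : S → A → ℝ) (γ C ρ : ℝ)
    (hP0 : ∀ s a s', 0 ≤ Pk s a s') (hP1 : ∀ s a, ∑ s', Pk s a s' = 1)
    (hπ0 : ∀ s a, 0 ≤ π s a) (hπ1 : ∀ s, ∑ a, π s a = 1)
    (hc0 : ∀ s a, 0 ≤ c s a) (hc1 : ∀ s a, c s a ≤ 1)
    (hγ0 : 0 < γ) (hγ1 : γ < 1)
    (hC : 0 < C) (hρ0 : 0 < ρ) (hρ1 : ρ < 1)
    (K : S × A → S × A → ℝ)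
    (hK : ∀ z w, K z w = Pk z.1 z.2 w.1 * π w.1 w.2)
    (σ : S × A → ℝ)
    (hσ0 : ∀ z, 0 ≤ σ z) (hσ1 : ∑ z, σ z = 1)
    (hstat : ∀ z', ∑ z, σ z * K z z' = σ z')
    (hmix : ∀ (t : ℕ) (z0 : S × A), ∑ z', |kpow K t z0 z' - σ z'| ≤ C * ρ ^ t)
    (Qpi : S × A → ℝ)
    (hQ : ∀ z, Qpi z = ∑' t : ℕ, γ ^ t * ∑ w, kpow K t z w * c w.1 w.2)
    (s : S) (a : A) (hσz : 0 < σ (s, a))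
    (tmix : ℕ) (htmix : tmix = ⌈Real.log (σ (s, a) / (2 * C)) / Real.log ρ⌉₊)
    (n : ℕ) (hn : 1 ≤ n) (z0 : S × A) :
    |(∑ i ∈ Finset.range n, hitProb K (s, a) i z0 *
        ∑ t ∈ Finset.range (n - i), γ ^ t * ∑ w, kpow K t (s, a) w * c w.1 w.2)
        - Qpi (s, a)|
      ≤ 2 * (n + 1) / (1 - γ) *
        (γ ^ (n - 1) + (1 - σ (s, a) / (2 * tmix)) ^ (n - 1)) :=
  omc_bias_bound_general Pk c π γ C ρ hP0 hP1 hπ0 hπ1 hc0 hc1 hγ0 hγ1 hC hρ0 hρ1 K hK σ hσ0 hσ1 hmix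
    Qpi hQ s a hσz tmix htmix n z0
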